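/- arXiv:1603.09287 — 2 statements merged into one kernel-verified Lean document; each statement's English description precedes it below -/
import Mathlib

section
/- Let m ≥ 0 be an integer and let δ ∈ {0,1} satisfy m ≡ δ (mod 2). Then there exist two-variable polynomials P₊ and P₋ with complex coefficients such that for all complex a, b with Re(a) > 0 and Re(b) > 0: 𝓑_{+1,m}(a,b) = P₊(a,b) · Γ(a/2) · Γ((δ+b)/2) / Γ((m+a+b)/2) and 𝓑_{-1,m}(a,b) = P₋(a,b) · Γ((1+a)/2) · Γ((1-δ+b)/2) / Γ((m+a+b)/2). -/
/-!
With `u = (1 + i x) / √(1 + x²)` one has `u ū = 1` and `u + ū = 2 / √(1 + x²)`, so the bracket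
`ū^m + ε u^m` satisfies a Chebyshev-type three-term recurrence in `m`. Since dividing the kernel by
`√(1 + x²)` shifts `b` to `b + 1`, integration turns it into
`𝓑_{ε,m+2}(a,b) = 2 𝓑_{ε,m+1}(a,b+1) - 𝓑_{ε,m}(a,b)`. The cases `m = 0, 1` are Euler beta
integrals (substitute `y = x² / (1 + x²)`), and by `Γ(z + 1) = z Γ(z)` the Gamma quotients of the
claim are polynomial multiples of each other along the recurrence.
-/

open MeasureTheory

/-- The generalized beta function `𝓑_{ε,m}(a,b)` for `ε = ±1`. -/
noncomputable def genBeta (ε : ℂ) (m : ℕ) (a b : ℂ) : ℂ :=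
  ∫ x in Set.Ioi (0 : ℝ),
    (x : ℂ) ^ (a - 1) * (1 + (x : ℂ) ^ 2) ^ (-(a + b) / 2) *
      (((1 + Complex.I * (x : ℂ)) / (Real.sqrt (1 + x ^ 2) : ℂ)) ^ (-(m : ℂ)) +
        ε * ((1 - Complex.I * (x : ℂ)) / (Real.sqrt (1 + x ^ 2) : ℂ)) ^ (-(m : ℂ)))

open Set Complex

theorem re_div_two_pos {z : ℂ} (hz : 0 < z.re) : 0 < (z / 2).re := by simpa using hz

theorem re_add_one_pos {z : ℂ} (hz : 0 < z.re) : 0 < (z + 1).re := by simp; linarith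

noncomputable def betaKernel (s t : ℂ) (x : ℝ) : ℂ :=
  (x : ℂ) ^ (s - 1) * (1 + (x : ℂ) ^ 2) ^ (-(s + t) / 2)

theorem hasDerivAt_sq_div_one_add_sq (x : ℝ) :
    HasDerivAt (fun y : ℝ => y ^ 2 / (1 + y ^ 2)) (2 * x / (1 + x ^ 2) ^ 2) x := by
  refine ((hasDerivAt_pow 2 x).div ((hasDerivAt_pow 2 x).const_add 1) (by positivity)).congr_deriv
    ?_
  ring

theorem injOn_sq_div_one_add_sq : InjOn (fun y : ℝ => y ^ 2 / (1 + y ^ 2)) (Ioi 0) := by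
  intro x (hx : 0 < x) y (hy : 0 < y) h
  have hsq : x ^ 2 = y ^ 2 := by
    field_simp at h
    linarith
  exact (pow_left_inj₀ hx.le hy.le two_ne_zero).mp hsq

theorem image_sq_div_one_add_sq : (fun y : ℝ => y ^ 2 / (1 + y ^ 2)) '' Ioi 0 = Ioo 0 1 := by
  ext t
  constructor
  · rintro ⟨x, hx, rfl⟩
    have hx : 0 < x := hx
    exact ⟨by positivity, (div_lt_one (by positivity)).mpr (by linarith)⟩
  · rintro ⟨ht0, ht1⟩
    have hpos : 0 < t / (1 - t) := div_pos ht0 (by linarith)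
    refine ⟨√(t / (1 - t)), Real.sqrt_pos.mpr hpos, ?_⟩
    simp only [Real.sq_sqrt hpos.le]
    field_simp
    ring

theorem ofReal_cpow_eq_exp {r : ℝ} (hr : 0 < r) (w : ℂ) :
    (r : ℂ) ^ w = exp (Real.log r * w) := by
  rw [cpow_def_of_ne_zero (ofReal_ne_zero.mpr hr.ne'), ofReal_log hr.le]

theorem abs_deriv_smul_betaIntegrand_eq (s t : ℂ) {x : ℝ} (hx : 0 < x) :
    |2 * x / (1 + x ^ 2) ^ 2| •
        (((x ^ 2 / (1 + x ^ 2) : ℝ) : ℂ) ^ (s / 2 - 1) *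
          (1 - ((x ^ 2 / (1 + x ^ 2) : ℝ) : ℂ)) ^ (t / 2 - 1)) =
      2 * betaKernel s t x := by
  have hr : 0 < 1 + x ^ 2 := by positivity
  have h1 : (1 : ℂ) - ((x ^ 2 / (1 + x ^ 2) : ℝ) : ℂ) = (((1 + x ^ 2)⁻¹ : ℝ) : ℂ) := by
    have : (1 + (x : ℂ) ^ 2) ≠ 0 := by exact_mod_cast hr.ne'
    push_cast; field_simp; ring
  have h2 : (1 : ℂ) + (x : ℂ) ^ 2 = ((1 + x ^ 2 : ℝ) : ℂ) := by push_cast; rfl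
  have h3 : 2 * x / (1 + x ^ 2) ^ 2 = 2 * Real.exp (Real.log x - Real.log ((1 + x ^ 2) ^ 2)) := by
    rw [Real.exp_sub, Real.exp_log hx, Real.exp_log (by positivity)]
    ring
  rw [abs_of_pos (by positivity), Complex.real_smul, h1, betaKernel, h2, h3,
    ofReal_cpow_eq_exp (by positivity), ofReal_cpow_eq_exp (by positivity),
    ofReal_cpow_eq_exp hx, ofReal_cpow_eq_exp hr, Real.log_div (by positivity) hr.ne', Real.log_inv]
  push_cast [Real.log_pow]
  rw [mul_assoc, ← exp_add, ← exp_add, ← exp_add]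
  congr 2
  ring

section BetaKernel

variable {s t : ℂ}

theorem integrableOn_betaKernel (hs : 0 < s.re) (ht : 0 < t.re) :
    IntegrableOn (betaKernel s t) (Ioi 0) := by
  have hbeta := (intervalIntegrable_iff_integrableOn_Ioo_of_le zero_le_one).mp
    (betaIntegral_convergent (re_div_two_pos hs) (re_div_two_pos ht))
  rw [← image_sq_div_one_add_sq, integrableOn_image_iff_integrableOn_abs_deriv_smul
    measurableSet_Ioi (fun x _ => (hasDerivAt_sq_div_one_add_sq x).hasDerivWithinAt)
    injOn_sq_div_one_add_sq] at hbeta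
  have h2 := (integrableOn_congr_fun (fun x (hx : x ∈ Ioi (0 : ℝ)) =>
    abs_deriv_smul_betaIntegrand_eq s t hx) measurableSet_Ioi).mp hbeta
  simpa [IntegrableOn] using h2.const_mul (1 / 2 : ℂ)

theorem integral_betaKernel (hs : 0 < s.re) (ht : 0 < t.re) :
    ∫ x in Ioi 0, betaKernel s t x = Gamma (s / 2) * Gamma (t / 2) / (2 * Gamma ((s + t) / 2)) := by
  have hbeta : betaIntegral (s / 2) (t / 2) = 2 * ∫ x in Ioi 0, betaKernel s t x := by
    rw [betaIntegral, intervalIntegral.integral_of_le zero_le_one, integral_Ioc_eq_integral_Ioo,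
      ← image_sq_div_one_add_sq, integral_image_eq_integral_abs_deriv_smul measurableSet_Ioi
      (fun x _ => (hasDerivAt_sq_div_one_add_sq x).hasDerivWithinAt) injOn_sq_div_one_add_sq,
      setIntegral_congr_fun measurableSet_Ioi (fun x hx => abs_deriv_smul_betaIntegrand_eq s t hx),
      integral_const_mul]
  have hGamma := Gamma_mul_Gamma_eq_betaIntegral (re_div_two_pos hs) (re_div_two_pos ht)
  rw [hbeta, ← add_div] at hGamma
  rw [hGamma]
  field_simp [Gamma_ne_zero_of_re_pos (re_div_two_pos (by simp; positivity : 0 < (s + t).re))]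

end BetaKernel

theorem betaKernel_mul_inv_sqrt (s t : ℂ) (x : ℝ) :
    betaKernel s t x * ((√(1 + x ^ 2) : ℝ) : ℂ)⁻¹ = betaKernel s (t + 1) x := by
  have hr : 0 < 1 + x ^ 2 := by positivity
  have h2 : (1 : ℂ) + (x : ℂ) ^ 2 = ((1 + x ^ 2 : ℝ) : ℂ) := by push_cast; rfl
  rw [betaKernel, betaKernel, h2, Real.sqrt_eq_rpow, ofReal_cpow hr.le, ← cpow_neg, mul_assoc,
    ← cpow_add _ _ (ofReal_ne_zero.mpr hr.ne')]
  congr 2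
  push_cast
  ring

theorem ofReal_mul_betaKernel (s t : ℂ) {x : ℝ} (hx : 0 < x) :
    x * betaKernel s (t + 1) x = betaKernel (s + 1) t x := by
  have hx' : (x : ℂ) ≠ 0 := ofReal_ne_zero.mpr hx.ne'
  rw [betaKernel, betaKernel, add_sub_cancel_right, cpow_sub _ _ hx', cpow_one]
  field_simp
  ring_nf

noncomputable def phase (x : ℝ) : ℂ := (1 + I * x) / (√(1 + x ^ 2) : ℝ)

theorem phase_neg (x : ℝ) : phase (-x) = (1 - I * x) / (√(1 + x ^ 2) : ℝ) := by
  simp [phase, sub_eq_add_neg]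

theorem sqrt_one_add_sq_ne_zero (x : ℝ) : ((√(1 + x ^ 2) : ℝ) : ℂ) ≠ 0 :=
  ofReal_ne_zero.mpr (Real.sqrt_pos.mpr (by positivity)).ne'

theorem phase_mul_phase_neg (x : ℝ) : phase x * phase (-x) = 1 := by
  have hsq : ((√(1 + x ^ 2) : ℝ) : ℂ) ^ 2 = 1 + (x : ℂ) ^ 2 := by
    rw [← ofReal_pow, Real.sq_sqrt (by positivity)]; push_cast; rfl
  rw [phase_neg, phase, div_mul_div_comm, ← sq, div_eq_one_iff_eq
    (pow_ne_zero 2 (sqrt_one_add_sq_ne_zero x)), hsq]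
  linear_combination (-(x : ℂ) ^ 2) * I_sq

theorem phase_add_phase_neg (x : ℝ) : phase x + phase (-x) = 2 * ((√(1 + x ^ 2) : ℝ) : ℂ)⁻¹ := by
  rw [phase_neg, phase, ← add_div, div_eq_mul_inv]
  ring

theorem norm_phase (x : ℝ) : ‖phase x‖ = 1 := by
  rw [phase, norm_div, norm_real, Real.norm_of_nonneg (Real.sqrt_nonneg _), mul_comm,
    ← ofReal_one, norm_add_mul_I, one_pow, div_self (Real.sqrt_pos.mpr (by positivity)).ne']

theorem continuous_phase : Continuous phase :=
  (by fun_prop : Continuous fun x : ℝ => 1 + I * x).div (by fun_prop) sqrt_one_add_sq_ne_zero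

theorem pow_add_two_eq_of_mul_eq_one {R : Type*} [CommRing R] {u v : R} (huv : u * v = 1) (m : ℕ) :
    u ^ (m + 2) = (u + v) * u ^ (m + 1) - u ^ m := by
  linear_combination (-u ^ m) * huv

noncomputable def phaseSum (ε : ℂ) (m : ℕ) (x : ℝ) : ℂ := phase (-x) ^ m + ε * phase x ^ m

theorem phaseSum_add_two (ε : ℂ) (m : ℕ) (x : ℝ) :
    phaseSum ε (m + 2) x =
      2 * ((√(1 + x ^ 2) : ℝ) : ℂ)⁻¹ * phaseSum ε (m + 1) x - phaseSum ε m x := by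
  have h := phase_mul_phase_neg x
  rw [phaseSum, phaseSum, phaseSum, ← phase_add_phase_neg,
    pow_add_two_eq_of_mul_eq_one h, pow_add_two_eq_of_mul_eq_one (by rwa [mul_comm] at h)]
  ring

theorem norm_phaseSum_le (ε : ℂ) (m : ℕ) (x : ℝ) : ‖phaseSum ε m x‖ ≤ 1 + ‖ε‖ :=
  (norm_add_le _ _).trans_eq (by simp [norm_phase])

theorem continuous_phaseSum (ε : ℂ) (m : ℕ) : Continuous (phaseSum ε m) :=
  ((continuous_phase.comp continuous_neg).pow m).add (continuous_const.mul (continuous_phase.pow m))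

theorem genBeta_eq_integral (ε : ℂ) (m : ℕ) (a b : ℂ) :
    genBeta ε m a b = ∫ x in Ioi 0, betaKernel a b x * phaseSum ε m x := by
  refine setIntegral_congr_fun measurableSet_Ioi fun x _ => ?_
  rw [betaKernel, phaseSum, ← phase_neg, ← phase, cpow_neg, cpow_neg, cpow_natCast, cpow_natCast,
    ← inv_pow, ← inv_pow, inv_eq_of_mul_eq_one_right (phase_mul_phase_neg x),
    inv_eq_of_mul_eq_one_left (phase_mul_phase_neg x)]

section GenBeta

variable {a b : ℂ}

theorem integrableOn_betaKernel_mul_phaseSum (ε : ℂ) (m : ℕ) (ha : 0 < a.re) (hb : 0 < b.re) :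
    IntegrableOn (fun x => betaKernel a b x * phaseSum ε m x) (Ioi 0) :=
  (integrableOn_betaKernel ha hb).mul_bdd
    (continuous_phaseSum ε m).aestronglyMeasurable (ae_of_all _ (norm_phaseSum_le ε m))

theorem genBeta_add_two (ε : ℂ) (m : ℕ) (ha : 0 < a.re) (hb : 0 < b.re) :
    genBeta ε (m + 2) a b = 2 * genBeta ε (m + 1) a (b + 1) - genBeta ε m a b := by
  have hpt : ∀ x, betaKernel a b x * phaseSum ε (m + 2) x =
      2 * (betaKernel a (b + 1) x * phaseSum ε (m + 1) x) - betaKernel a b x * phaseSum ε m x := by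
    intro x
    rw [phaseSum_add_two, ← betaKernel_mul_inv_sqrt]
    ring
  simp only [genBeta_eq_integral, hpt]
  rw [integral_sub
    ((integrableOn_betaKernel_mul_phaseSum ε (m + 1) ha (re_add_one_pos hb)).const_mul 2)
    (integrableOn_betaKernel_mul_phaseSum ε m ha hb), integral_const_mul]

theorem genBeta_zero (ε : ℂ) (ha : 0 < a.re) (hb : 0 < b.re) :
    genBeta ε 0 a b = (1 + ε) * (Gamma (a / 2) * Gamma (b / 2) / (2 * Gamma ((a + b) / 2))) := by
  simp only [genBeta_eq_integral, phaseSum, pow_zero, mul_one, mul_comm _ (1 + ε)]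
  rw [integral_const_mul, integral_betaKernel ha hb]

theorem genBeta_one_one (ha : 0 < a.re) (hb : 0 < b.re) :
    genBeta 1 1 a b = Gamma (a / 2) * Gamma ((b + 1) / 2) / Gamma ((a + (b + 1)) / 2) := by
  have hpt : ∀ x, betaKernel a b x * phaseSum 1 1 x = 2 * betaKernel a (b + 1) x := by
    intro x
    rw [phaseSum, pow_one, pow_one, one_mul, add_comm, phase_add_phase_neg,
      ← betaKernel_mul_inv_sqrt]
    ring
  simp only [genBeta_eq_integral, hpt]
  rw [integral_const_mul, integral_betaKernel ha (re_add_one_pos hb)]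
  ring

theorem genBeta_neg_one_one (ha : 0 < a.re) (hb : 0 < b.re) :
    genBeta (-1) 1 a b = -I * (Gamma ((a + 1) / 2) * Gamma (b / 2) / Gamma ((a + 1 + b) / 2)) := by
  have hpt : ∀ x ∈ Ioi (0 : ℝ), betaKernel a b x * phaseSum (-1) 1 x =
      -2 * I * betaKernel (a + 1) b x := by
    intro x hx
    rw [← ofReal_mul_betaKernel _ _ hx, ← betaKernel_mul_inv_sqrt, phaseSum, phase_neg, phase]
    ring
  rw [genBeta_eq_integral, setIntegral_congr_fun measurableSet_Ioi hpt, integral_const_mul,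
    integral_betaKernel (re_add_one_pos ha) hb]
  ring

end GenBeta

theorem MvPolynomial.eval_bind₁_shift_snd (P : MvPolynomial (Fin 2) ℂ) (a b : ℂ) :
    eval ![a, b] (bind₁ ![X 0, X 1 + 1] P) = eval ![a, b + 1] P := by
  change aeval ![a, b] (bind₁ ![X 0, X 1 + 1] P) = aeval ![a, b + 1] P
  rw [aeval_bind₁]
  congr 1
  ext i; fin_cases i <;> simp

def IsPolyMultiple (f g : ℂ → ℂ → ℂ) : Prop :=
  ∃ P : MvPolynomial (Fin 2) ℂ, ∀ a b : ℂ, 0 < a.re → 0 < b.re →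
    f a b = MvPolynomial.eval ![a, b] P * g a b

namespace IsPolyMultiple

open MvPolynomial

variable {f f₁ f₂ g h : ℂ → ℂ → ℂ}

theorem congr_left (hf : ∀ a b : ℂ, 0 < a.re → 0 < b.re → f a b = f₁ a b)
    (h₁ : IsPolyMultiple f₁ g) : IsPolyMultiple f g := by
  obtain ⟨P, hP⟩ := h₁
  exact ⟨P, fun a b ha hb => (hf a b ha hb).trans (hP a b ha hb)⟩

theorem trans (hfg : IsPolyMultiple f g) (hgh : IsPolyMultiple g h) : IsPolyMultiple f h := by
  obtain ⟨P, hP⟩ := hfg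
  obtain ⟨Q, hQ⟩ := hgh
  exact ⟨P * Q, fun a b ha hb => by rw [hP a b ha hb, hQ a b ha hb, map_mul, mul_assoc]⟩

theorem const_mul (c : ℂ) (hf : IsPolyMultiple f g) : IsPolyMultiple (fun a b => c * f a b) g := by
  obtain ⟨P, hP⟩ := hf
  exact ⟨C c * P, fun a b ha hb => by beta_reduce; rw [hP a b ha hb, map_mul, eval_C, mul_assoc]⟩

theorem sub (h₁ : IsPolyMultiple f₁ g) (h₂ : IsPolyMultiple f₂ g) :
    IsPolyMultiple (fun a b => f₁ a b - f₂ a b) g := by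
  obtain ⟨P₁, hP₁⟩ := h₁
  obtain ⟨P₂, hP₂⟩ := h₂
  exact ⟨P₁ - P₂, fun a b ha hb => by
    beta_reduce; rw [hP₁ a b ha hb, hP₂ a b ha hb, map_sub, sub_mul]⟩

theorem comp_add_one (hf : IsPolyMultiple f g) :
    IsPolyMultiple (fun a b => f a (b + 1)) (fun a b => g a (b + 1)) := by
  obtain ⟨P, hP⟩ := hf
  refine ⟨bind₁ ![X 0, X 1 + 1] P, fun a b ha hb => ?_⟩
  rw [eval_bind₁_shift_snd]
  exact hP a (b + 1) ha (re_add_one_pos hb)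

end IsPolyMultiple

theorem isPolyMultiple_of_recurrence {F G : ℕ → ℂ → ℂ → ℂ}
    (hF : ∀ m a b, 0 < a.re → 0 < b.re → F (m + 2) a b = 2 * F (m + 1) a (b + 1) - F m a b)
    (hG : ∀ m, IsPolyMultiple (G m) (G (m + 2)))
    (hG' : ∀ m, IsPolyMultiple (fun a b => G (m + 1) a (b + 1)) (G (m + 2)))
    (h₀ : IsPolyMultiple (F 0) (G 0)) (h₁ : IsPolyMultiple (F 1) (G 1)) :
    ∀ m, IsPolyMultiple (F m) (G m)
  | 0 => h₀
  | 1 => h₁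
  | m + 2 =>
    IsPolyMultiple.congr_left (hF m)
      ((((isPolyMultiple_of_recurrence hF hG hG' h₀ h₁ (m + 1)).comp_add_one.trans
        (hG' m)).const_mul 2).sub ((isPolyMultiple_of_recurrence hF hG hG' h₀ h₁ m).trans (hG m)))

noncomputable def gammaRatio (A : ℂ → ℂ) (β m : ℕ) (a b : ℂ) : ℂ :=
  A a * Gamma (((((β + m) % 2 : ℕ) : ℂ) + b) / 2) / Gamma (((m : ℂ) + a + b) / 2)

theorem isPolyMultiple_gammaRatio_add_two (A : ℂ → ℂ) (β m : ℕ) :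
    IsPolyMultiple (gammaRatio A β m) (gammaRatio A β (m + 2)) := by
  refine ⟨.C (1 / 2) * (.C (m : ℂ) + .X 0 + .X 1), fun a b ha hb => ?_⟩
  have hw : 0 < (((m : ℂ) + a + b) / 2).re := by simp; positivity
  have hGamma : Gamma ((((m + 2 : ℕ) : ℂ) + a + b) / 2) =
      ((m : ℂ) + a + b) / 2 * Gamma (((m : ℂ) + a + b) / 2) := by
    rw [← Gamma_add_one _ (ne_zero_of_re_pos hw)]; push_cast; ring_nf
  have hmod : (β + (m + 2)) % 2 = (β + m) % 2 := by omega
  simp only [gammaRatio, hGamma, hmod, map_mul, map_add, MvPolynomial.eval_C, MvPolynomial.eval_X,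
    Matrix.cons_val_zero, Matrix.cons_val_one, Matrix.cons_val_fin_one]
  field_simp [Gamma_ne_zero_of_re_pos hw, div_ne_zero_iff.mp (ne_zero_of_re_pos hw)]

theorem isPolyMultiple_gammaRatio_succ_shift (A : ℂ → ℂ) (β m : ℕ) :
    IsPolyMultiple (fun a b => gammaRatio A β (m + 1) a (b + 1)) (gammaRatio A β (m + 2)) := by
  have hden : ∀ a b : ℂ,
      (((m + 1 : ℕ) : ℂ) + a + (b + 1)) / 2 = (((m + 2 : ℕ) : ℂ) + a + b) / 2 := by
    intro a b; push_cast; ring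
  rcases Nat.mod_two_eq_zero_or_one (β + m) with h | h
  · refine ⟨.C (1 / 2) * .X 1, fun a b _ hb => ?_⟩
    have hb2 : b / 2 ≠ 0 := ne_zero_of_re_pos (re_div_two_pos hb)
    have hnum : (((((β + (m + 1)) % 2 : ℕ) : ℂ) + (b + 1)) / 2) = b / 2 + 1 := by
      rw [show (β + (m + 1)) % 2 = 1 by omega]; push_cast; ring
    have hmod : (β + (m + 2)) % 2 = 0 := by omega
    simp only [gammaRatio, hden, hnum, hmod, Gamma_add_one _ hb2, map_mul, MvPolynomial.eval_C,
      MvPolynomial.eval_X, Matrix.cons_val_one, Matrix.cons_val_fin_one, Nat.cast_zero, zero_add]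
    ring
  · refine ⟨1, fun a b _ _ => ?_⟩
    have hnum : (((((β + (m + 1)) % 2 : ℕ) : ℂ) + (b + 1)) / 2) = ((1 : ℕ) + b) / 2 := by
      rw [show (β + (m + 1)) % 2 = 0 by omega]; push_cast; ring
    have hmod : (β + (m + 2)) % 2 = 1 := by omega
    simp only [gammaRatio, hden, hnum, hmod, map_one, one_mul]

theorem genBeta_one_isPolyMultiple (m : ℕ) :
    IsPolyMultiple (genBeta 1 m) (gammaRatio (fun a => Gamma (a / 2)) 0 m) := by
  refine isPolyMultiple_of_recurrence (fun m _ _ => genBeta_add_two 1 m)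
    (isPolyMultiple_gammaRatio_add_two _ _) (isPolyMultiple_gammaRatio_succ_shift _ _)
    ⟨1, fun a b ha hb => ?_⟩ ⟨1, fun a b ha hb => ?_⟩ m
  · have := Gamma_ne_zero_of_re_pos (re_div_two_pos (by simp; positivity : 0 < (a + b).re))
    rw [genBeta_zero 1 ha hb, gammaRatio, map_one, one_mul]
    norm_num
    field_simp
  · rw [genBeta_one_one ha hb, gammaRatio, map_one, one_mul]
    norm_num
    ring_nf

theorem genBeta_neg_one_isPolyMultiple (m : ℕ) :
    IsPolyMultiple (genBeta (-1) m) (gammaRatio (fun a => Gamma ((1 + a) / 2)) 1 m) := by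
  refine isPolyMultiple_of_recurrence (fun m _ _ => genBeta_add_two (-1) m)
    (isPolyMultiple_gammaRatio_add_two _ _) (isPolyMultiple_gammaRatio_succ_shift _ _)
    ⟨0, fun a b ha hb => ?_⟩ ⟨.C (-I), fun a b ha hb => ?_⟩ m
  · rw [genBeta_zero (-1) ha hb, map_zero, zero_mul, add_neg_cancel, zero_mul]
  · rw [genBeta_neg_one_one ha hb, gammaRatio, MvPolynomial.eval_C]
    norm_num
    ring_nf

/-- Factorization of `𝓑_{±1,m}(a,b)` as a two-variable polynomial times an explicit
quotient of Gamma functions, where `δ ∈ {0,1}` has the parity of `m`. -/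
theorem stmt_5 (m : ℕ) (δ : ℕ) (hδ : δ = 0 ∨ δ = 1) (hm : m % 2 = δ % 2) :
    ∃ Pp Pm : MvPolynomial (Fin 2) ℂ, ∀ a b : ℂ, 0 < a.re → 0 < b.re →
      genBeta 1 m a b =
        MvPolynomial.eval ![a, b] Pp *
          (Complex.Gamma (a / 2) * Complex.Gamma (((δ : ℂ) + b) / 2) /
            Complex.Gamma (((m : ℂ) + a + b) / 2)) ∧
      genBeta (-1) m a b =
        MvPolynomial.eval ![a, b] Pm *
          (Complex.Gamma ((1 + a) / 2) * Complex.Gamma ((1 - (δ : ℂ) + b) / 2) /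
            Complex.Gamma (((m : ℂ) + a + b) / 2)) := by
  obtain ⟨Pp, hPp⟩ := genBeta_one_isPolyMultiple m
  obtain ⟨Pm, hPm⟩ := genBeta_neg_one_isPolyMultiple m
  have hmδ : m % 2 = δ := by omega
  have hmδ' : (((1 + m) % 2 : ℕ) : ℂ) = 1 - δ := by
    rcases hδ with rfl | rfl
    · rw [show (1 + m) % 2 = 1 by omega]; simp
    · rw [show (1 + m) % 2 = 0 by omega]; simp
  refine ⟨Pp, Pm, fun a b ha hb => ⟨?_, ?_⟩⟩
  · rw [hPp a b ha hb, gammaRatio, zero_add, hmδ]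
  · rw [hPm a b ha hb, gammaRatio, hmδ']
end

section
/- Let μ₁, μ₂, μ₃ be complex numbers with Re(μ₁) > Re(μ₂) > Re(μ₃), and let n₂ be real. Then ∫_{ℝ³} (1+u₂²+u₃²)^{(-1+μ₃-μ₂)/2} · (1+u₁²+(u₃-u₁u₂)²)^{(-1+μ₂-μ₁)/2} · e(-n₂u₂) du₁du₂du₃ = [ 2^{1-(μ₁-μ₂)} π Γ(μ₁-μ₂) / Γ((1+μ₁-μ₂)/2)² ] · [ 2^{1-(μ₁-μ₃)} π Γ(μ₁-μ₃) / Γ((1+μ₁-μ₃)/2)² ] · ∫_ℝ (1+x²)^{-(1+μ₂-μ₃)/2} e(-n₂x) dx. -/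
/-!
Let `a`, `b` be the exponents of the two factors, `r = 1 + u₂²`, `S = 1 + u₂² + u₃²` and
`J c = ∫ (1 + t²)^c dt`. Completing the square, `1 + u₁² + (u₃ - u₁u₂)² = r (u₁ - u₂u₃/r)² + S/r`,
so integrating out `u₁` turns `S^a (…)^b` into `r^(-1-b) S^(a+b+1/2) J b`. As `S = r + u₃²`,
integrating out `u₃` then gives `r^a J (a+b+1/2) J b`, and what is left is the one-dimensional
integral of `r^a e(-n₂u₂)`. The same computation with the real parts of the exponents justifies
Fubini. The substitution `x = 1/(1+t²)` identifies `J (-(p+1/2))` with the beta integral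
`B(p, 1/2)`, and Legendre's duplication formula puts `B(u/2, 1/2)` in the stated form.
-/

open MeasureTheory Set

lemma integrable_one_add_sq_rpow {A : ℝ} (hA : A < -(1 / 2)) :
    Integrable fun t : ℝ => (1 + t ^ 2) ^ A := by
  have := integrable_rpow_neg_one_add_norm_sq (E := ℝ) (μ := volume) (r := -2 * A)
    (by rw [Module.finrank_self]; push_cast; linarith)
  simpa [Real.norm_eq_abs, sq_abs, show -(-2 * A) / 2 = A by ring] using this

lemma integrable_one_add_sq_cpow {c : ℂ} (hc : c.re < -(1 / 2)) :
    Integrable fun t : ℝ => ((1 + t ^ 2 : ℝ) : ℂ) ^ c := by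
  refine (integrable_one_add_sq_rpow hc).mono' (by fun_prop : Measurable _).aestronglyMeasurable
    (.of_forall fun t => ?_)
  rw [Complex.norm_cpow_eq_rpow_re_of_pos (by positivity)]

lemma integral_eq_two_smul_integral_Ioi_of_even {E : Type*} [NormedAddCommGroup E]
    [NormedSpace ℝ E] {f : ℝ → E} (hf : Integrable f) (heven : ∀ x, f (-x) = f x) :
    ∫ x, f x = (2 : ℝ) • ∫ x in Ioi 0, f x := by
  have h : ∫ x in Iic 0, f x = ∫ x in Ioi 0, f x := by
    rw [← neg_zero, ← integral_comp_neg_Ioi, neg_zero]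
    simp_rw [heven]
  rw [← integral_add_compl measurableSet_Iic hf, compl_Iic, h, two_smul]

lemma ofReal_cpow_eq_exp_s15 {x : ℝ} (hx : 0 < x) (w : ℂ) :
    (x : ℂ) ^ w = Complex.exp (Real.log x * w) := by
  rw [Complex.cpow_def_of_ne_zero (by exact_mod_cast hx.ne'), Complex.ofReal_log hx.le]

lemma image_inv_one_add_sq_Ioi : (fun t : ℝ => (1 + t ^ 2)⁻¹) '' Ioi 0 = Ioo 0 1 := by
  ext x
  constructor
  · rintro ⟨t, ht, rfl⟩
    have : 1 < 1 + t ^ 2 := by have := pow_pos (mem_Ioi.1 ht) 2; linarith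
    exact ⟨by positivity, inv_lt_one_of_one_lt₀ this⟩
  · rintro ⟨hx0, hx1⟩
    refine ⟨√(x⁻¹ - 1), Real.sqrt_pos.2 (by rw [sub_pos]; exact one_lt_inv₀ hx0 |>.2 hx1), ?_⟩
    show (1 + √(x⁻¹ - 1) ^ 2)⁻¹ = x
    rw [Real.sq_sqrt (by rw [sub_nonneg]; exact (one_le_inv₀ hx0).2 hx1.le)]
    simp

lemma injOn_inv_one_add_sq_Ioi : InjOn (fun t : ℝ => (1 + t ^ 2)⁻¹) (Ioi 0) :=
  fun a ha b hb hab => by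
    simp only [inv_inj, add_right_inj] at hab
    exact (pow_left_inj₀ (le_of_lt ha) (le_of_lt hb) two_ne_zero).1 hab

lemma hasDerivAt_inv_one_add_sq (t : ℝ) :
    HasDerivAt (fun t : ℝ => (1 + t ^ 2)⁻¹) (-(2 * t) / (1 + t ^ 2) ^ 2) t := by
  refine (((hasDerivAt_pow 2 t).const_add 1).fun_inv (by positivity)).congr_deriv ?_
  norm_num

lemma abs_deriv_smul_betaIntegrand_inv_one_add_sq {t : ℝ} (ht : 0 < t) (p : ℂ) :
    |-(2 * t) / (1 + t ^ 2) ^ 2| • ((((1 + t ^ 2)⁻¹ : ℝ) : ℂ) ^ (p - 1)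
        * (1 - (((1 + t ^ 2)⁻¹ : ℝ) : ℂ)) ^ (1 / 2 - 1 : ℂ))
      = (2 : ℝ) • ((1 + t ^ 2 : ℝ) : ℂ) ^ (-(p + 1 / 2)) := by
  have hL : 0 < 1 + t ^ 2 := by positivity
  have hsub : (1 : ℂ) - ((1 + t ^ 2)⁻¹ : ℝ) = ((t ^ 2 / (1 + t ^ 2) : ℝ) : ℂ) := by
    have : (1 + (t : ℂ) ^ 2) ≠ 0 := by exact_mod_cast hL.ne'
    push_cast
    field_simp
    ring
  have hjac : |-(2 * t) / (1 + t ^ 2) ^ 2|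
      = 2 * Real.exp (Real.log t - 2 * Real.log (1 + t ^ 2)) := by
    rw [abs_div, abs_neg, abs_of_pos (by positivity), abs_of_pos (by positivity), Real.exp_sub,
      Real.exp_log ht, ← Real.exp_log (pow_pos hL 2), Real.log_pow]
    push_cast
    ring
  rw [hsub, hjac, ofReal_cpow_eq_exp_s15 (x := (1 + t ^ 2)⁻¹) (by positivity),
    ofReal_cpow_eq_exp_s15 (x := t ^ 2 / (1 + t ^ 2)) (by positivity), ofReal_cpow_eq_exp_s15 hL,
    Real.log_inv, Real.log_div (by positivity) hL.ne', Real.log_pow, ← Complex.exp_add]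
  simp only [Complex.real_smul]
  push_cast
  rw [mul_assoc, ← Complex.exp_add]
  congr 2
  ring

lemma integral_one_add_sq_cpow_eq_betaIntegral {p : ℂ} (hp : 0 < p.re) :
    ∫ t : ℝ, ((1 + t ^ 2 : ℝ) : ℂ) ^ (-(p + 1 / 2)) = Complex.betaIntegral p (1 / 2) := by
  have hint := integrable_one_add_sq_cpow (c := -(p + 1 / 2)) (by
    simp only [Complex.neg_re, Complex.add_re, Complex.div_ofNat_re, Complex.one_re]
    linarith)
  rw [Complex.betaIntegral, intervalIntegral.integral_of_le zero_le_one,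
    integral_Ioc_eq_integral_Ioo, ← image_inv_one_add_sq_Ioi,
    integral_image_eq_integral_abs_deriv_smul measurableSet_Ioi
      (fun t _ => (hasDerivAt_inv_one_add_sq t).hasDerivWithinAt) injOn_inv_one_add_sq_Ioi,
    integral_eq_two_smul_integral_Ioi_of_even hint (fun t => by rw [neg_sq]), ← integral_smul]
  exact setIntegral_congr_fun measurableSet_Ioi fun t ht =>
    (abs_deriv_smul_betaIntegrand_inv_one_add_sq ht p).symm

lemma Complex.Gamma_one_half_eq_sqrt : Complex.Gamma (1 / 2) = (√Real.pi : ℂ) := by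
  rw [Complex.Gamma_one_half_eq, Real.sqrt_eq_rpow, Complex.ofReal_cpow Real.pi_pos.le]
  norm_num

lemma integral_one_add_sq_cpow_neg_one_add_div_two {u : ℂ} (hu : 0 < u.re) :
    ∫ t : ℝ, ((1 + t ^ 2 : ℝ) : ℂ) ^ (-(1 + u) / 2)
      = 2 ^ (1 - u) * Real.pi * Complex.Gamma u / Complex.Gamma ((1 + u) / 2) ^ 2 := by
  have hu2 : 0 < (u / 2).re := by simpa using hu
  have hdup := Complex.Gamma_mul_Gamma_add_half (u / 2)
  rw [show u / 2 + 1 / 2 = (1 + u) / 2 by ring, show 2 * (u / 2) = u by ring] at hdup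
  have hne : Complex.Gamma ((1 + u) / 2) ≠ 0 :=
    Complex.Gamma_ne_zero_of_re_pos (by
      simp only [Complex.add_re, Complex.div_ofNat_re, Complex.one_re]
      linarith)
  have hpi : (Real.pi : ℂ) = (√Real.pi : ℂ) * (√Real.pi : ℂ) := by
    rw [← Complex.ofReal_mul, Real.mul_self_sqrt Real.pi_pos.le]
  rw [show -(1 + u) / 2 = -(u / 2 + 1 / 2) by ring, integral_one_add_sq_cpow_eq_betaIntegral hu2,
    Complex.betaIntegral_eq_Gamma_mul_div _ _ hu2 (by norm_num), Complex.Gamma_one_half_eq_sqrt,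
    show u / 2 + 1 / 2 = (1 + u) / 2 by ring, hpi]
  field_simp
  linear_combination hdup

section Quadratic

variable {E : Type*} [NormedAddCommGroup E] {α β : ℝ}

lemma quadratic_eq_mul_one_add_sq (hα : 0 < α) (hβ : 0 < β) (δ t : ℝ) :
    α * (t - δ) ^ 2 + β = β * (1 + (√(α / β) * (t - δ)) ^ 2) := by
  rw [mul_pow, Real.sq_sqrt (div_pos hα hβ).le]
  field_simp
  ring

lemma Integrable.comp_quadratic {f : ℝ → E} (hf : Integrable fun s => f (β * (1 + s ^ 2)))
    (hα : 0 < α) (hβ : 0 < β) (δ : ℝ) :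
    Integrable fun t => f (α * (t - δ) ^ 2 + β) := by
  simp_rw [quadratic_eq_mul_one_add_sq hα hβ δ]
  exact (hf.comp_mul_left' (Real.sqrt_pos.2 (div_pos hα hβ)).ne').comp_sub_right δ

lemma integral_comp_quadratic [NormedSpace ℝ E] (f : ℝ → E) (hα : 0 < α) (hβ : 0 < β)
    (δ : ℝ) :
    ∫ t, f (α * (t - δ) ^ 2 + β) = √(β / α) • ∫ s, f (β * (1 + s ^ 2)) := by
  simp_rw [quadratic_eq_mul_one_add_sq hα hβ δ]
  rw [integral_sub_right_eq_self (fun t => f (β * (1 + (√(α / β) * t) ^ 2))) δ,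
    Measure.integral_comp_mul_left (fun s => f (β * (1 + s ^ 2))), ← Real.sqrt_inv, inv_div,
    abs_of_nonneg (Real.sqrt_nonneg _)]

lemma sqrt_div_eq_rpow_mul_rpow (hα : 0 < α) (hβ : 0 < β) :
    √(β / α) = α ^ (-(1 / 2) : ℝ) * β ^ (1 / 2 : ℝ) := by
  rw [Real.sqrt_eq_rpow, Real.div_rpow hβ.le hα.le, Real.rpow_neg hα.le]
  ring

lemma ofReal_mul_one_add_sq_cpow (hβ : 0 < β) (s : ℝ) (c : ℂ) :
    ((β * (1 + s ^ 2) : ℝ) : ℂ) ^ c = (β : ℂ) ^ c * ((1 + s ^ 2 : ℝ) : ℂ) ^ c := by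
  rw [Complex.ofReal_mul, Complex.mul_cpow_ofReal_nonneg hβ.le (by positivity)]

lemma integrable_quadratic_cpow {c : ℂ} (hc : c.re < -(1 / 2)) (hα : 0 < α) (hβ : 0 < β)
    (δ : ℝ) : Integrable fun t : ℝ => ((α * (t - δ) ^ 2 + β : ℝ) : ℂ) ^ c := by
  refine Integrable.comp_quadratic (f := fun y : ℝ => (y : ℂ) ^ c) ?_ hα hβ δ
  simp_rw [ofReal_mul_one_add_sq_cpow hβ]
  exact (integrable_one_add_sq_cpow hc).const_mul _

lemma integral_quadratic_rpow (A : ℝ) (hα : 0 < α) (hβ : 0 < β) (δ : ℝ) :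
    ∫ t, (α * (t - δ) ^ 2 + β) ^ A
      = α ^ (-(1 / 2) : ℝ) * β ^ (A + 1 / 2) * ∫ s : ℝ, (1 + s ^ 2) ^ A := by
  rw [integral_comp_quadratic (fun y => y ^ A) hα hβ δ, sqrt_div_eq_rpow_mul_rpow hα hβ,
    Real.rpow_add hβ]
  have h (s : ℝ) : (β * (1 + s ^ 2)) ^ A = β ^ A * (1 + s ^ 2) ^ A :=
    Real.mul_rpow hβ.le (by positivity)
  simp_rw [h]
  rw [integral_const_mul, smul_eq_mul]
  ring

lemma integral_quadratic_cpow (c : ℂ) (hα : 0 < α) (hβ : 0 < β) (δ : ℝ) :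
    ∫ t : ℝ, ((α * (t - δ) ^ 2 + β : ℝ) : ℂ) ^ c
      = (α : ℂ) ^ (-(1 / 2) : ℂ) * (β : ℂ) ^ (c + 1 / 2)
        * ∫ s : ℝ, ((1 + s ^ 2 : ℝ) : ℂ) ^ c := by
  rw [integral_comp_quadratic (fun y : ℝ => (y : ℂ) ^ c) hα hβ δ,
    sqrt_div_eq_rpow_mul_rpow hα hβ, Complex.cpow_add _ _ (by exact_mod_cast hβ.ne')]
  simp_rw [ofReal_mul_one_add_sq_cpow hβ]
  rw [integral_const_mul, Complex.real_smul, Complex.ofReal_mul, Complex.ofReal_cpow hα.le,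
    Complex.ofReal_cpow hβ.le]
  push_cast
  ring

end Quadratic

section Fiberwise

variable {X : Type*} [MeasurableSpace X] {μ : Measure X} [SFinite μ] {α β δ : X → ℝ}
  {φ : X → ℂ} {c : ℂ}

lemma integrable_prod_quadratic_cpow (hα : ∀ x, 0 < α x) (hβ : ∀ x, 0 < β x)
    (hαm : Measurable α) (hβm : Measurable β) (hδm : Measurable δ) (hφm : Measurable φ)
    (hc : c.re < -(1 / 2))
    (hφ : Integrable (fun x => φ x * (α x : ℂ) ^ (-(1 / 2) : ℂ) * (β x : ℂ) ^ (c + 1 / 2)) μ) :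
    Integrable (fun p : ℝ × X => φ p.2 * ((α p.2 * (p.1 - δ p.2) ^ 2 + β p.2 : ℝ) : ℂ) ^ c)
      (volume.prod μ) := by
  refine (integrable_prod_iff' (by fun_prop : Measurable _).aestronglyMeasurable).2
    ⟨.of_forall fun x => (integrable_quadratic_cpow hc (hα x) (hβ x) (δ x)).const_mul (φ x), ?_⟩
  have hnorm (x : X) : ∫ t : ℝ, ‖φ x * ((α x * (t - δ x) ^ 2 + β x : ℝ) : ℂ) ^ c‖
      = ‖φ x * (α x : ℂ) ^ (-(1 / 2) : ℂ) * (β x : ℂ) ^ (c + 1 / 2)‖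
        * ∫ s : ℝ, (1 + s ^ 2) ^ c.re := by
    have hq (t : ℝ) : 0 < α x * (t - δ x) ^ 2 + β x := by
      have := hα x; have := hβ x; positivity
    simp_rw [norm_mul, Complex.norm_cpow_eq_rpow_re_of_pos (hq _),
      Complex.norm_cpow_eq_rpow_re_of_pos (hα x), Complex.norm_cpow_eq_rpow_re_of_pos (hβ x)]
    rw [integral_const_mul, integral_quadratic_rpow _ (hα x) (hβ x)]
    simp only [Complex.neg_re, Complex.add_re, Complex.div_ofNat_re, Complex.one_re]
    ring
  simp_rw [hnorm]
  exact hφ.norm.mul_const _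

lemma integral_prod_quadratic_cpow (hα : ∀ x, 0 < α x) (hβ : ∀ x, 0 < β x)
    (hαm : Measurable α) (hβm : Measurable β) (hδm : Measurable δ) (hφm : Measurable φ)
    (hc : c.re < -(1 / 2))
    (hφ : Integrable (fun x => φ x * (α x : ℂ) ^ (-(1 / 2) : ℂ) * (β x : ℂ) ^ (c + 1 / 2)) μ) :
    ∫ p, φ p.2 * ((α p.2 * (p.1 - δ p.2) ^ 2 + β p.2 : ℝ) : ℂ) ^ c ∂(volume.prod μ)
      = (∫ x, φ x * (α x : ℂ) ^ (-(1 / 2) : ℂ) * (β x : ℂ) ^ (c + 1 / 2) ∂μ)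
        * ∫ s : ℝ, ((1 + s ^ 2 : ℝ) : ℂ) ^ c := by
  rw [integral_prod_symm _ (integrable_prod_quadratic_cpow hα hβ hαm hβm hδm hφm hc hφ),
    ← integral_mul_const]
  congr 1 with x
  dsimp only
  rw [integral_const_mul, integral_quadratic_cpow _ (hα x) (hβ x)]
  ring

end Fiberwise

lemma one_add_sq_add_sub_mul_sq_eq (t y z : ℝ) :
    1 + t ^ 2 + (z - t * y) ^ 2
      = (1 + y ^ 2) * (t - y * z / (1 + y ^ 2)) ^ 2 + (1 + y ^ 2 + z ^ 2) / (1 + y ^ 2) := by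
  have : 1 + y ^ 2 ≠ 0 := by positivity
  field_simp
  ring

lemma ofReal_cpow_mul_cpow_mul_div_cpow {r s : ℝ} (hr : 0 < r) (hs : 0 < s) (a b : ℂ) :
    (s : ℂ) ^ a * (r : ℂ) ^ (-(1 / 2) : ℂ) * ((s / r : ℝ) : ℂ) ^ (b + 1 / 2)
      = (r : ℂ) ^ (-1 - b) * (s : ℂ) ^ (a + b + 1 / 2) := by
  have hr0 : (r : ℂ) ≠ 0 := by exact_mod_cast hr.ne'
  have hs0 : (s : ℂ) ≠ 0 := by exact_mod_cast hs.ne'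
  rw [Complex.ofReal_div, Complex.div_cpow_ofReal_nonneg hs.le hr.le,
    show -1 - b = -(1 / 2) - (b + 1 / 2) by ring, Complex.cpow_sub (-(1 / 2)) (b + 1 / 2) hr0,
    show a + b + 1 / 2 = a + (b + 1 / 2) by ring, Complex.cpow_add a (b + 1 / 2) hs0]
  ring

lemma integrable_prod_one_add_sq_add_sq_cpow {q : ℂ} (hq : q.re < -(1 / 2)) {φ : ℝ → ℂ}
    (hφm : Measurable φ) (hφ : Integrable fun y => φ y * ((1 + y ^ 2 : ℝ) : ℂ) ^ (q + 1 / 2)) :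
    Integrable fun x : ℝ × ℝ => φ x.1 * ((1 + x.1 ^ 2 + x.2 ^ 2 : ℝ) : ℂ) ^ q := by
  have h := integrable_prod_quadratic_cpow (μ := volume) (α := fun _ => 1) (δ := fun _ => 0)
    (β := fun y => 1 + y ^ 2) (fun _ => one_pos) (fun _ => by positivity) measurable_const
    (by fun_prop) measurable_const hφm hq (by simpa using hφ)
  refine h.swap.congr (.of_forall fun x => ?_)
  simp only [Function.comp, Prod.fst_swap, Prod.snd_swap]
  ring_nf

lemma integral_prod_one_add_sq_add_sq_cpow {q : ℂ} (hq : q.re < -(1 / 2)) {φ : ℝ → ℂ}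
    (hφm : Measurable φ) (hφ : Integrable fun y => φ y * ((1 + y ^ 2 : ℝ) : ℂ) ^ (q + 1 / 2)) :
    ∫ x : ℝ × ℝ, φ x.1 * ((1 + x.1 ^ 2 + x.2 ^ 2 : ℝ) : ℂ) ^ q
      = (∫ y, φ y * ((1 + y ^ 2 : ℝ) : ℂ) ^ (q + 1 / 2))
        * ∫ s : ℝ, ((1 + s ^ 2 : ℝ) : ℂ) ^ q := by
  have h := integral_prod_quadratic_cpow (μ := volume) (α := fun _ => 1) (δ := fun _ => 0)
    (β := fun y => 1 + y ^ 2) (fun _ => one_pos) (fun _ => by positivity) measurable_const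
    (by fun_prop) measurable_const hφm hq (by simpa using hφ)
  simp only [Complex.ofReal_one, Complex.one_cpow, mul_one] at h
  rw [← h, ← integral_prod_swap, Measure.volume_eq_prod]
  congr 1 with x
  simp only [Prod.fst_swap, Prod.snd_swap]
  ring_nf

theorem integral_jacquet_eq {a b : ℂ} (hb : b.re < -(1 / 2))
    (hab : (a + b + 1 / 2).re < -(1 / 2)) {ψ : ℝ → ℂ} (hψm : Measurable ψ)
    (hψ : Integrable fun y => ((1 + y ^ 2 : ℝ) : ℂ) ^ a * ψ y) :
    ∫ u : ℝ × ℝ × ℝ, ((1 + u.2.1 ^ 2 + u.2.2 ^ 2 : ℝ) : ℂ) ^ a *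
        ((1 + u.1 ^ 2 + (u.2.2 - u.1 * u.2.1) ^ 2 : ℝ) : ℂ) ^ b * ψ u.2.1
      = (∫ s : ℝ, ((1 + s ^ 2 : ℝ) : ℂ) ^ b)
        * (∫ s : ℝ, ((1 + s ^ 2 : ℝ) : ℂ) ^ (a + b + 1 / 2))
        * ∫ y, ((1 + y ^ 2 : ℝ) : ℂ) ^ a * ψ y := by
  have hr (y : ℝ) : 0 < 1 + y ^ 2 := by positivity
  have hS (x : ℝ × ℝ) : 0 < 1 + x.1 ^ 2 + x.2 ^ 2 := by positivity
  have hcollect (y : ℝ) : ((1 + y ^ 2 : ℝ) : ℂ) ^ (-1 - b) * ψ y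
      * ((1 + y ^ 2 : ℝ) : ℂ) ^ (a + b + 1 / 2 + 1 / 2) = ((1 + y ^ 2 : ℝ) : ℂ) ^ a * ψ y := by
    rw [mul_right_comm, ← Complex.cpow_add _ _ (by exact_mod_cast (hr y).ne')]
    ring_nf
  have hφ : Integrable fun y => ((1 + y ^ 2 : ℝ) : ℂ) ^ (-1 - b) * ψ y
      * ((1 + y ^ 2 : ℝ) : ℂ) ^ (a + b + 1 / 2 + 1 / 2) := by
    simpa only [hcollect] using hψ
  have hG (x : ℝ × ℝ) : ((1 + x.1 ^ 2 + x.2 ^ 2 : ℝ) : ℂ) ^ a * ψ x.1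
      * ((1 + x.1 ^ 2 : ℝ) : ℂ) ^ (-(1 / 2) : ℂ)
      * (((1 + x.1 ^ 2 + x.2 ^ 2) / (1 + x.1 ^ 2) : ℝ) : ℂ) ^ (b + 1 / 2)
      = ((1 + x.1 ^ 2 : ℝ) : ℂ) ^ (-1 - b) * ψ x.1
        * ((1 + x.1 ^ 2 + x.2 ^ 2 : ℝ) : ℂ) ^ (a + b + 1 / 2) := by
    rw [mul_right_comm _ (ψ x.1), mul_right_comm _ (ψ x.1),
      ofReal_cpow_mul_cpow_mul_div_cpow (hr x.1) (hS x)]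
    ring
  have hGint := integrable_prod_one_add_sq_add_sq_cpow hab (by fun_prop) hφ
  simp_rw [← hG] at hGint
  have h := integral_prod_quadratic_cpow (μ := volume) (α := fun x : ℝ × ℝ => 1 + x.1 ^ 2)
    (β := fun x => (1 + x.1 ^ 2 + x.2 ^ 2) / (1 + x.1 ^ 2))
    (δ := fun x => x.1 * x.2 / (1 + x.1 ^ 2))
    (φ := fun x => ((1 + x.1 ^ 2 + x.2 ^ 2 : ℝ) : ℂ) ^ a * ψ x.1) (fun x => hr x.1)
    (fun x => by have := hS x; positivity) (by fun_prop) (by fun_prop) (by fun_prop)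
    (by fun_prop) hb hGint
  refine Eq.trans ?_ (h.trans ?_)
  · rw [← Measure.volume_eq_prod]
    congr 1 with u
    rw [one_add_sq_add_sub_mul_sq_eq]
    ring
  · simp_rw [hG]
    rw [integral_prod_one_add_sq_add_sq_cpow hab (by fun_prop) hφ]
    simp_rw [hcollect]
    ring

/-- The spherical long-element Jacquet–Whittaker integral at the degenerate character
`ψ_{(0,n₂)}` factors as `𝒲₀(0,μ₁−μ₂)·𝒲₀(0,μ₁−μ₃)·𝒲₀(n₂,μ₂−μ₃)`, for
`Re μ₁ > Re μ₂ > Re μ₃`. Here `u = (u₁, u₂, u₃)` and `e(t) = exp(2πit)`. -/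
theorem stmt_15 (μ₁ μ₂ μ₃ : ℂ) (h12 : μ₂.re < μ₁.re) (h23 : μ₃.re < μ₂.re) (n₂ : ℝ) :
    (∫ u : ℝ × ℝ × ℝ,
        ((1 + u.2.1 ^ 2 + u.2.2 ^ 2 : ℝ) : ℂ) ^ ((-1 + μ₃ - μ₂) / 2) *
          ((1 + u.1 ^ 2 + (u.2.2 - u.1 * u.2.1) ^ 2 : ℝ) : ℂ) ^ ((-1 + μ₂ - μ₁) / 2) *
          Complex.exp (2 * (Real.pi : ℂ) * Complex.I * ((-n₂ * u.2.1 : ℝ) : ℂ)))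
      = ((2 : ℂ) ^ (1 - (μ₁ - μ₂)) * (Real.pi : ℂ) * Complex.Gamma (μ₁ - μ₂) /
            Complex.Gamma ((1 + μ₁ - μ₂) / 2) ^ 2) *
          ((2 : ℂ) ^ (1 - (μ₁ - μ₃)) * (Real.pi : ℂ) * Complex.Gamma (μ₁ - μ₃) /
            Complex.Gamma ((1 + μ₁ - μ₃) / 2) ^ 2) *
          ∫ x : ℝ, ((1 + x ^ 2 : ℝ) : ℂ) ^ (-(1 + μ₂ - μ₃) / 2) *
            Complex.exp (2 * (Real.pi : ℂ) * Complex.I * ((-n₂ * x : ℝ) : ℂ)) := by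
  have ha : (-(1 + μ₂ - μ₃) / 2).re < -(1 / 2) := by
    simp only [Complex.add_re, Complex.sub_re, Complex.neg_re, Complex.div_ofNat_re, Complex.one_re]
    linarith
  have hb : ((-1 + μ₂ - μ₁) / 2).re < -(1 / 2) := by
    simp only [Complex.add_re, Complex.sub_re, Complex.neg_re, Complex.div_ofNat_re, Complex.one_re]
    linarith
  have hab : (-(1 + μ₂ - μ₃) / 2 + (-1 + μ₂ - μ₁) / 2 + 1 / 2).re < -(1 / 2) := by
    simp only [Complex.add_re, Complex.sub_re, Complex.neg_re, Complex.div_ofNat_re, Complex.one_re]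
    linarith
  have hphase : Integrable fun y : ℝ => ((1 + y ^ 2 : ℝ) : ℂ) ^ (-(1 + μ₂ - μ₃) / 2) *
      Complex.exp (2 * (Real.pi : ℂ) * Complex.I * ((-n₂ * y : ℝ) : ℂ)) :=
    (integrable_one_add_sq_cpow ha).mul_bdd (c := 1)
      (by fun_prop : Measurable _).aestronglyMeasurable
      (.of_forall fun y => by simp [Complex.norm_exp])
  rw [show (-1 + μ₃ - μ₂) / 2 = -(1 + μ₂ - μ₃) / 2 by ring,
    integral_jacquet_eq hb hab (by fun_prop) hphase,
    show (-1 + μ₂ - μ₁) / 2 = -(1 + (μ₁ - μ₂)) / 2 by ring,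
    show -(1 + μ₂ - μ₃) / 2 + -(1 + (μ₁ - μ₂)) / 2 + 1 / 2 = -(1 + (μ₁ - μ₃)) / 2 by ring,
    integral_one_add_sq_cpow_neg_one_add_div_two (by simpa using h12),
    integral_one_add_sq_cpow_neg_one_add_div_two (by simpa using h12.trans' h23)]
  simp only [add_sub_assoc]
end
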